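/- Let 𝓗 be a finite-dimensional Hilbert space and let C₀, C₁ ∈ [𝓗] satisfy Im(C₁ C₀*) = 0 and 0 ∈ ρ(C₀ ± i C₁) (i.e. C₀ + iC₁ and C₀ − iC₁ are invertible). Then the linear relation θ = {(h₀,h₁) ∈ 𝓗 ⊕ 𝓗 : C₀ h₀ + C₁ h₁ = 0} is self-adjoint: θ = θ*. -/

import Mathlib

noncomputable section

/-- The adjoint relation `θ* = {(k,k') : ⟪k',h⟫ = ⟪k,h'⟫ for all (h,h') ∈ θ}`. -/
def relAdjSet {H : Type*} [NormedAddCommGroup H] [InnerProductSpace ℂ H]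
    (A : Set (H × H)) : Set (H × H) :=
  {p | ∀ q ∈ A, (@inner ℂ _ _ p.2 q.1) = @inner ℂ _ _ p.1 q.2}

/-!
Write `θ = ker [C₀ C₁]` and let `R` be the range of `g ↦ (-C₁* g, C₀* g)`. Always `R ⊆ θ*`, and
`θ* ⊆ θ` as soon as `R ⊆ θ`, which is exactly `C₀ C₁* = C₁ C₀*`. Invertibility of `C₀ + i C₁`
makes `[C₀ C₁]` surjective and `g ↦ (-C₁* g, C₀* g)` injective, so `θ` and `R` both have
dimension `dim 𝓗`; hence `θ = R ⊆ θ*`.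
-/

open ContinuousLinearMap (adjoint adjoint_inner_left adjoint_inner_right)
open LinearMap (ker range)

namespace RelAdj

variable {H : Type*} [NormedAddCommGroup H] [InnerProductSpace ℂ H]

def kerCoprod (C₀ C₁ : H →L[ℂ] H) : Submodule ℂ (H × H) :=
  ker ((C₀ : H →ₗ[ℂ] H).coprod (C₁ : H →ₗ[ℂ] H))

theorem mem_kerCoprod {C₀ C₁ : H →L[ℂ] H} {p : H × H} :
    p ∈ kerCoprod C₀ C₁ ↔ C₀ p.1 + C₁ p.2 = 0 :=
  Iff.rfl

theorem surjective_coprod {C₀ C₁ : H →L[ℂ] H}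
    (hplus : Function.Surjective (C₀ + Complex.I • C₁)) :
    Function.Surjective ((C₀ : H →ₗ[ℂ] H).coprod (C₁ : H →ₗ[ℂ] H)) := by
  intro y
  obtain ⟨x, rfl⟩ := hplus y
  exact ⟨(x, Complex.I • x), by simp⟩

theorem finrank_kerCoprod [FiniteDimensional ℂ H] {C₀ C₁ : H →L[ℂ] H}
    (hplus : Function.Surjective (C₀ + Complex.I • C₁)) :
    Module.finrank ℂ (kerCoprod C₀ C₁) = Module.finrank ℂ H := by
  have h := LinearMap.finrank_range_add_finrank_ker ((C₀ : H →ₗ[ℂ] H).coprod (C₁ : H →ₗ[ℂ] H))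
  rw [LinearMap.range_eq_top.mpr (surjective_coprod hplus), finrank_top,
    Module.finrank_prod] at h
  exact (Nat.add_left_cancel h.symm).symm

variable [CompleteSpace H]

def adjointColumn (C₀ C₁ : H →L[ℂ] H) : H →ₗ[ℂ] H × H :=
  (-(adjoint C₁) : H →ₗ[ℂ] H).prod (adjoint C₀)

variable {C₀ C₁ : H →L[ℂ] H}

@[simp]
theorem adjointColumn_apply (g : H) :
    adjointColumn C₀ C₁ g = (-adjoint C₁ g, adjoint C₀ g) :=
  rfl

theorem range_adjointColumn_subset_relAdjSet :
    (range (adjointColumn C₀ C₁) : Set (H × H)) ⊆ relAdjSet (kerCoprod C₀ C₁) := by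
  rintro _ ⟨g, rfl⟩ q hq
  have hq' : inner ℂ g (C₀ q.1) + inner ℂ g (C₁ q.2) = 0 := by
    rw [← inner_add_right, mem_kerCoprod.mp hq, inner_zero_right]
  simp only [adjointColumn_apply, inner_neg_left, adjoint_inner_left]
  linear_combination hq'

theorem range_adjointColumn_le_kerCoprod (hsa : IsSelfAdjoint (C₁ ∘L adjoint C₀)) :
    range (adjointColumn C₀ C₁) ≤ kerCoprod C₀ C₁ := by
  rintro _ ⟨g, rfl⟩
  have hcomm : C₀ (adjoint C₁ g) = C₁ (adjoint C₀ g) := by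
    simpa [ContinuousLinearMap.adjoint_comp] using DFunLike.congr_fun hsa.adjoint_eq g
  simp [mem_kerCoprod, hcomm]

theorem relAdjSet_subset_kerCoprod (hle : range (adjointColumn C₀ C₁) ≤ kerCoprod C₀ C₁) :
    relAdjSet (kerCoprod C₀ C₁ : Set (H × H)) ⊆ kerCoprod C₀ C₁ := by
  intro p hp
  suffices ∀ g, inner ℂ (C₀ p.1 + C₁ p.2) g = 0 from inner_self_eq_zero.mp (this _)
  intro g
  have h := hp _ (hle ⟨g, rfl⟩)
  simp only [adjointColumn_apply, inner_neg_right] at h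
  rw [inner_add_left, ← adjoint_inner_right, ← adjoint_inner_right]
  linear_combination -h

theorem injective_adjointColumn (hplus : Function.Surjective (C₀ + Complex.I • C₁)) :
    Function.Injective (adjointColumn C₀ C₁) := by
  rw [← LinearMap.ker_eq_bot, Submodule.eq_bot_iff]
  intro g hg
  simp only [LinearMap.mem_ker, adjointColumn_apply, Prod.mk_eq_zero, neg_eq_zero] at hg
  suffices ∀ x, inner ℂ g ((C₀ + Complex.I • C₁) x) = 0 by
    obtain ⟨x, hx⟩ := hplus g
    exact inner_self_eq_zero.mp (hx ▸ this x)
  intro x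
  simp [← adjoint_inner_left, hg.1, hg.2]

theorem range_adjointColumn_eq_kerCoprod [FiniteDimensional ℂ H]
    (hsa : IsSelfAdjoint (C₁ ∘L adjoint C₀))
    (hplus : Function.Surjective (C₀ + Complex.I • C₁)) :
    range (adjointColumn C₀ C₁) = kerCoprod C₀ C₁ :=
  Submodule.eq_of_le_of_finrank_eq (range_adjointColumn_le_kerCoprod hsa) <| by
    rw [LinearMap.finrank_range_of_inj (injective_adjointColumn hplus), finrank_kerCoprod hplus]

end RelAdj

open RelAdj in
theorem stmt7_general {𝓗 : Type*} [NormedAddCommGroup 𝓗] [InnerProductSpace ℂ 𝓗]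
    [FiniteDimensional ℂ 𝓗]
    (C₀ C₁ : 𝓗 →L[ℂ] 𝓗)
    (hsa : IsSelfAdjoint (C₁ ∘L ContinuousLinearMap.adjoint C₀))
    (hplus : Function.Bijective ⇑(C₀ + Complex.I • C₁)) :
    let θ : Submodule ℂ (𝓗 × 𝓗) :=
      LinearMap.ker ((C₀ : 𝓗 →ₗ[ℂ] 𝓗).coprod (C₁ : 𝓗 →ₗ[ℂ] 𝓗))
    (θ : Set (𝓗 × 𝓗)) = relAdjSet (θ : Set (𝓗 × 𝓗)) := by
  intro θ
  change (kerCoprod C₀ C₁ : Set (𝓗 × 𝓗)) = relAdjSet (kerCoprod C₀ C₁)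
  refine subset_antisymm ?_
    (relAdjSet_subset_kerCoprod (range_adjointColumn_le_kerCoprod hsa))
  calc (kerCoprod C₀ C₁ : Set (𝓗 × 𝓗))
      = range (adjointColumn C₀ C₁) := by
        rw [range_adjointColumn_eq_kerCoprod hsa hplus.surjective]
    _ ⊆ relAdjSet (kerCoprod C₀ C₁) := range_adjointColumn_subset_relAdjSet

/-- If `C₀, C₁ ∈ [𝓗]` satisfy `Im (C₁ C₀*) = 0` (i.e. `C₁C₀*` is self-adjoint) and
`C₀ ± i C₁` are invertible, then the linear relation
`θ = {(h₀,h₁) : C₀ h₀ + C₁ h₁ = 0}` is self-adjoint: `θ = θ*`. -/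
theorem stmt7 {𝓗 : Type*} [NormedAddCommGroup 𝓗] [InnerProductSpace ℂ 𝓗]
    [FiniteDimensional ℂ 𝓗]
    (C₀ C₁ : 𝓗 →L[ℂ] 𝓗)
    (hsa : IsSelfAdjoint (C₁ ∘L ContinuousLinearMap.adjoint C₀))
    (hplus : Function.Bijective ⇑(C₀ + Complex.I • C₁))
    (hminus : Function.Bijective ⇑(C₀ - Complex.I • C₁)) :
    let θ : Submodule ℂ (𝓗 × 𝓗) :=
      LinearMap.ker ((C₀ : 𝓗 →ₗ[ℂ] 𝓗).coprod (C₁ : 𝓗 →ₗ[ℂ] 𝓗))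
    (θ : Set (𝓗 × 𝓗)) = relAdjSet (θ : Set (𝓗 × 𝓗)) :=
  stmt7_general C₀ C₁ hsa hplus
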